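/- The Lie algebra A_{4,8}^{-1} is a contraction of sl(2,ℝ) × ℝ. -/

import Mathlib

/-!
For a unit `s`, the vectors `f₁ = 2s e₂`, `f₂ = s e₁`, `f₃ = e₃`, `f₄ = e₂ + e₄` form a basis of
`sl(2,ℝ) × ℝ` in which `[f₂,f₃] = f₁`, `[f₂,f₄] = f₂`, `[f₃,f₄] = -f₃`, `[f₁,f₄] = 0`, while
`[f₁,f₂] = -2s f₂` and `[f₁,f₃] = 2s f₃`. So the bracket of `sl(2,ℝ) × ℝ`, read in this basis, is
the bracket of `A_{4,8}^{-1}` plus a term linear in `s`, and tends to it as `s → 0`.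
-/

open Filter Topology

/-- `bg₀` (a bracket on `W`) is a contraction of `bg` (a bracket on `V`). -/
def IsContractionOf {V W : Type*} [AddCommGroup V] [Module ℝ V]
    [AddCommGroup W] [Module ℝ W] [TopologicalSpace W]
    (bg : V → V → V) (bg₀ : W → W → W) : Prop :=
  ∃ I : Set ℝ, (𝓝[I \ {0}] (0 : ℝ)).NeBot ∧
    ∃ C : ℝ → (W ≃ₗ[ℝ] V), ∀ x y : W,
      Tendsto (fun r => (C r).symm (bg (C r x) (C r y))) (𝓝[I \ {0}] (0 : ℝ)) (𝓝 (bg₀ x y))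

/-- The bracket of `sl(2,ℝ) × ℝ` on `Fin 4 → ℝ`: `[e₁,e₂] = e₁`, `[e₂,e₃] = e₃`,
`[e₁,e₃] = 2e₂`, with `e₄` central. -/
def sl2RBracket (x y : Fin 4 → ℝ) : Fin 4 → ℝ :=
  ![x 0 * y 1 - x 1 * y 0, 2 * (x 0 * y 2 - x 2 * y 0), x 1 * y 2 - x 2 * y 1, 0]

/-- The bracket of `A_{4,8}^{-1}` on `Fin 4 → ℝ`: `[e₂,e₃] = e₁`, `[e₂,e₄] = e₂`,
`[e₃,e₄] = -e₃`. -/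
def a481Bracket (x y : Fin 4 → ℝ) : Fin 4 → ℝ :=
  ![x 1 * y 2 - x 2 * y 1, x 1 * y 3 - x 3 * y 1, -(x 2 * y 3 - x 3 * y 2), 0]

theorem isContractionOf_of_symm_bracket_eq_add_smul {V W : Type*} [AddCommGroup V] [Module ℝ V]
    [AddCommGroup W] [Module ℝ W] [TopologicalSpace W] [ContinuousAdd W] [ContinuousSMul ℝ W]
    (bg : V → V → V) (bg₀ b : W → W → W)
    (C : ℝˣ → (W ≃ₗ[ℝ] V))
    (hC : ∀ (s : ℝˣ) (x y : W), (C s).symm (bg (C s x) (C s y)) = bg₀ x y + (s : ℝ) • b x y) :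
    IsContractionOf bg bg₀ := by
  refine ⟨Set.univ, ?_, fun r => if h : r = 0 then C 1 else C (Units.mk0 r h), fun x y => ?_⟩
  · rw [← Set.compl_eq_univ_sdiff]
    infer_instance
  have hlin : Tendsto (fun r : ℝ => bg₀ x y + r • b x y) (𝓝[Set.univ \ {0}] 0) (𝓝 (bg₀ x y)) := by
    refine tendsto_nhdsWithin_of_tendsto_nhds ?_
    simpa using ((continuous_id.smul continuous_const).const_add (bg₀ x y)).tendsto (0 : ℝ)
  refine hlin.congr' (eventually_nhdsWithin_of_forall fun r hr => ?_)
  have hr0 : r ≠ 0 := hr.2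
  simp only [dif_neg hr0, hC, Units.val_mk0]

-- Sends the standard basis to `(f₁, f₂, f₃, f₄)` of the header (coordinates indexed from `0`).
noncomputable def sl2ContractionEquiv (s : ℝˣ) : (Fin 4 → ℝ) ≃ₗ[ℝ] (Fin 4 → ℝ) where
  toFun x := ![s * x 1, 2 * s * x 0 + x 3, x 2, x 3]
  invFun w := ![(w 1 - w 3) / (2 * s), w 0 / s, w 2, w 3]
  map_add' x y := by
    funext i; fin_cases i <;> simp <;> ring
  map_smul' c x := by
    funext i; fin_cases i <;> simp <;> ring
  left_inv x := by
    funext i; fin_cases i <;> simp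
  right_inv w := by
    funext i; fin_cases i <;> simp <;> field_simp; ring

theorem sl2ContractionEquiv_symm_sl2RBracket (s : ℝˣ) (x y : Fin 4 → ℝ) :
    (sl2ContractionEquiv s).symm
        (sl2RBracket (sl2ContractionEquiv s x) (sl2ContractionEquiv s y)) =
      a481Bracket x y +
        (s : ℝ) • ![0, 2 * (x 1 * y 0 - x 0 * y 1), 2 * (x 0 * y 2 - x 2 * y 0), 0] := by
  funext i
  fin_cases i <;> simp [sl2ContractionEquiv, sl2RBracket, a481Bracket] <;> field_simp <;> ring

/-- The Lie algebra `A_{4,8}^{-1}` is a contraction of `sl(2,ℝ) × ℝ`. -/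
theorem a481_isContractionOf_sl2R : IsContractionOf sl2RBracket a481Bracket :=
  isContractionOf_of_symm_bracket_eq_add_smul _ _ _ sl2ContractionEquiv
    sl2ContractionEquiv_symm_sl2RBracket
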